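/- Let Ω be a finite set and G ≤ Sym(Ω) a permutation group such that the 2-closure G^(2) is a Frobenius group. Then G = G^(2). -/

import Mathlib

section Prelude

variable {Ω : Type*}

/-- `G` is transitive on `Ω`. -/
def IsTransSub (G : Subgroup (Equiv.Perm Ω)) : Prop :=
  ∀ a b : Ω, ∃ g ∈ G, g a = b

/-- The orbit of `β` under the stabilizer of `α` in `G`. -/
def stabOrbit (G : Subgroup (Equiv.Perm Ω)) (α β : Ω) : Set Ω :=
  {γ : Ω | ∃ g ∈ G, g α = α ∧ g β = γ}

/-- `G` is `3/2`-transitive: transitive, and all orbits of a point stabilizer `G_α`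
on `Ω \ {α}` have the same size `m > 1`. -/
def IsThreeHalvesTrans (G : Subgroup (Equiv.Perm Ω)) : Prop :=
  IsTransSub G ∧ ∃ m : ℕ, 1 < m ∧ ∀ α β : Ω, β ≠ α → (stabOrbit G α β).ncard = m

/-- `G` is `2`-transitive. -/
def IsTwoTrans (G : Subgroup (Equiv.Perm Ω)) : Prop :=
  ∀ a b c d : Ω, a ≠ b → c ≠ d → ∃ g ∈ G, g a = c ∧ g b = d

/-- The partition (equivalence relation) `r` is preserved by `G`. -/
def IsGInvariantSetoid (G : Subgroup (Equiv.Perm Ω)) (r : Setoid Ω) : Prop :=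
  ∀ g ∈ G, ∀ a b : Ω, r a b → r (g a) (g b)

/-- `G` is primitive: transitive and the only `G`-invariant partitions of `Ω` are
the partition into singletons (`⊥`) and the one-class partition (`⊤`). -/
def IsPrimitiveSub (G : Subgroup (Equiv.Perm Ω)) : Prop :=
  IsTransSub G ∧ ∀ r : Setoid Ω, IsGInvariantSetoid G r → r = ⊥ ∨ r = ⊤

/-- `G` is a Frobenius group: transitive, point stabilizers are nontrivial, and
two-point stabilizers are trivial. -/
def IsFrobeniusSub (G : Subgroup (Equiv.Perm Ω)) : Prop :=
  IsTransSub G ∧ (∀ α : Ω, ∃ g ∈ G, g ≠ 1 ∧ g α = α) ∧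
    (∀ g ∈ G, ∀ α β : Ω, α ≠ β → g α = α → g β = β → g = 1)

/-- The `k`-closure of `G`: all permutations `σ` such that for every `k`-tuple `v`
there is `g ∈ G` agreeing with `σ` on `v`; it is the largest subgroup of `Sym(Ω)`
with the same orbits as `G` on `Ω^k`. -/
def kClosure (G : Subgroup (Equiv.Perm Ω)) (k : ℕ) : Subgroup (Equiv.Perm Ω) where
  carrier := {σ : Equiv.Perm Ω | ∀ v : Fin k → Ω, ∃ g ∈ G, ∀ i, σ (v i) = g (v i)}
  one_mem' := fun v => ⟨1, G.one_mem, fun _ => rfl⟩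
  mul_mem' := by
    intro a b ha hb v
    obtain ⟨g, hg, hgv⟩ := hb v
    obtain ⟨h, hh, hhv⟩ := ha fun i => b (v i)
    refine ⟨h * g, G.mul_mem hh hg, fun i => ?_⟩
    simp only [Equiv.Perm.mul_apply]
    rw [hhv i, hgv i]
  inv_mem' := by
    intro a ha v
    obtain ⟨g, hg, hgv⟩ := ha fun i => a⁻¹ (v i)
    refine ⟨g⁻¹, G.inv_mem hg, fun i => ?_⟩
    have h := hgv i
    simp only [show ∀ x, a (a⁻¹ x) = x from fun x => a.apply_symm_apply x] at h
    calc a⁻¹ (v i) = g⁻¹ (g (a⁻¹ (v i))) := by simp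
    _ = g⁻¹ (v i) := by rw [← h]

/-- `G` is an affine permutation group: it has a normal subgroup `V` which is an
elementary abelian `p`-group acting regularly on `Ω`. -/
def IsAffineSub (G : Subgroup (Equiv.Perm Ω)) : Prop :=
  ∃ p : ℕ, p.Prime ∧ ∃ V : Subgroup (Equiv.Perm Ω), V ≤ G ∧
    (∀ g ∈ G, ∀ v ∈ V, g * v * g⁻¹ ∈ V) ∧
    (∀ v ∈ V, ∀ w ∈ V, v * w = w * v) ∧
    (∀ v ∈ V, v ^ p = 1) ∧
    (∀ a b : Ω, ∃! v : Equiv.Perm Ω, v ∈ V ∧ v a = b)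

/-- `G` is almost simple: it has a nonabelian simple normal subgroup `S` whose
centralizer in `G` is trivial. -/
def IsAlmostSimpleSub (G : Subgroup (Equiv.Perm Ω)) : Prop :=
  ∃ S : Subgroup (Equiv.Perm Ω), S ≤ G ∧
    (∀ g ∈ G, ∀ s ∈ S, g * s * g⁻¹ ∈ S) ∧
    IsSimpleGroup S ∧ (∃ s ∈ S, ∃ t ∈ S, s * t ≠ t * s) ∧
    (∀ g ∈ G, (∀ s ∈ S, g * s = s * g) → g = 1)

/-- The conjugation homomorphism `Sym(α) → Sym(β)` induced by a bijection `e : α ≃ β`. -/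
def permConjHom {α β : Type*} (e : α ≃ β) : Equiv.Perm α →* Equiv.Perm β where
  toFun σ := e.permCongr σ
  map_one' := by ext x; simp
  map_mul' σ τ := by
    ext x
    simp [Equiv.Perm.mul_apply]

/-- The conjugate of `G ≤ Sym(α)` under a bijection `e : α ≃ β`. -/
def conjGroup {α β : Type*} (e : α ≃ β) (G : Subgroup (Equiv.Perm α)) :
    Subgroup (Equiv.Perm β) :=
  G.map (permConjHom e)

/-- The affine semilinear group `AΓL(1, p^d)` over a field `F` (of order `p^d`),
as a set of permutations: all maps `x ↦ a * x^(p^i) + b` with `a ≠ 0`, `0 ≤ i < d`. -/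
def AGammaL1Set (F : Type*) [Field F] (p d : ℕ) : Set (Equiv.Perm F) :=
  {σ : Equiv.Perm F | ∃ (a b : F) (i : ℕ), a ≠ 0 ∧ i < d ∧ ∀ x : F, σ x = a * x ^ p ^ i + b}

/-- The Passman group `AS₀` over a field `F` (of order `p^(d/2)`) with respect to
a generator `θ` of `Fˣ`: the subgroup of `Sym(F × F)` generated by all translations
together with `(x,y) ↦ (θx, θ⁻¹y)`, `(x,y) ↦ (-x, y)` and `(x,y) ↦ (y, x)`. -/
def PassmanGroup (F : Type*) [Field F] (θ : Fˣ) : Subgroup (Equiv.Perm (F × F)) :=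
  Subgroup.closure
    ({σ : Equiv.Perm (F × F) | ∃ u v : F, σ = (Equiv.addRight u).prodCongr (Equiv.addRight v)} ∪
      {(Equiv.mulLeft₀ (θ : F) θ.ne_zero).prodCongr
          (Equiv.mulLeft₀ ((θ⁻¹ : Fˣ) : F) θ⁻¹.ne_zero),
        (Equiv.neg F).prodCongr (Equiv.refl F),
        Equiv.prodComm F F})

/-- The socle of a group: the subgroup generated by all minimal normal subgroups. -/
def groupSocle (H : Type*) [Group H] : Subgroup H :=
  sSup {N : Subgroup H | N.Normal ∧ N ≠ ⊥ ∧
    ∀ M : Subgroup H, M.Normal → M ≠ ⊥ → M ≤ N → M = N}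

end Prelude

theorem le_kClosure {Ω : Type*} (G : Subgroup (Equiv.Perm Ω)) (k : ℕ) : G ≤ kClosure G k :=
  fun σ hσ _ => ⟨σ, hσ, fun _ => rfl⟩

theorem exists_mem_eq_on_pair_of_mem_kClosure_two {Ω : Type*} {G : Subgroup (Equiv.Perm Ω)}
    {σ : Equiv.Perm Ω} (hσ : σ ∈ kClosure G 2) (α β : Ω) :
    ∃ g ∈ G, g α = σ α ∧ g β = σ β := by
  obtain ⟨g, hg, hgv⟩ := hσ ![α, β]
  exact ⟨g, hg, (hgv 0).symm, (hgv 1).symm⟩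

/-- An element `σ ∈ H` agrees on a pair `(α, β)` with some `g ∈ G`, so `g⁻¹ σ` fixes `α`
and `β`. -/
theorem eq_of_le_kClosure_two_of_twoPointStabilizer_trivial {Ω : Type*}
    {G H : Subgroup (Equiv.Perm Ω)} (hGH : G ≤ H) (hH : H ≤ kClosure G 2)
    (hfree : ∀ g ∈ H, ∀ α β : Ω, α ≠ β → g α = α → g β = β → g = 1) : G = H := by
  refine le_antisymm hGH fun σ hσ => ?_
  rcases subsingleton_or_nontrivial Ω with _ | _
  · rw [Subsingleton.elim σ 1]
    exact G.one_mem
  obtain ⟨α, β, hαβ⟩ := exists_pair_ne Ω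
  obtain ⟨g, hg, hgα, hgβ⟩ := exists_mem_eq_on_pair_of_mem_kClosure_two (hH hσ) α β
  have hgσ : g⁻¹ * σ = 1 :=
    hfree _ (H.mul_mem (H.inv_mem (hGH hg)) hσ) α β hαβ
      (Equiv.Perm.inv_eq_iff_eq.mpr hgα.symm) (Equiv.Perm.inv_eq_iff_eq.mpr hgβ.symm)
  rwa [← inv_mul_eq_one.mp hgσ]

theorem eq_twoClosure_of_twoClosure_frobenius_general {Ω : Type*}
    (G : Subgroup (Equiv.Perm Ω)) (h : IsFrobeniusSub (kClosure G 2)) :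
    G = kClosure G 2 :=
  eq_of_le_kClosure_two_of_twoPointStabilizer_trivial (le_kClosure G 2) le_rfl h.2.2

/-- If the 2-closure of `G` is a Frobenius group, then `G = G^(2)`. -/
theorem eq_twoClosure_of_twoClosure_frobenius {Ω : Type*} [Fintype Ω]
    (G : Subgroup (Equiv.Perm Ω)) (h : IsFrobeniusSub (kClosure G 2)) :
    G = kClosure G 2 :=
  eq_twoClosure_of_twoClosure_frobenius_general G h
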